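/- arXiv:2205.03976 — 5 statements merged into one kernel-verified Lean document; each statement's English description precedes it below -/
import Mathlib

section
/- Let p be a prime and let B be the quaternion algebra over ℚ with ℚ-basis 1, i, j, k, where i² = −1, j² = −p, and k = ij = −ji. Let O be the ℤ-submodule of B spanned by 1, i, (1+j)/2, (i+k)/2. If θ ∈ O is nonzero and anticommutes with i (that is, iθ = −θi), then θ = mj + nk for some integers m, n, and hence the reduced norm of θ satisfies Nrd(θ) = p(m² + n²) ≥ p. -/
open Quaternion

/-- The quaternion algebra `(-1, -p | ℚ)`. -/
@[reducible] def B1728 (p : ℕ) := ℍ[ℚ, -1, -(p : ℚ)]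

/-- The basis element `i` of `B1728 p`, with `i² = -1`. -/
def qi (p : ℕ) : B1728 p := ⟨0, 1, 0, 0⟩

/-- The basis element `j` of `B1728 p`, with `j² = -p`. -/
def qj (p : ℕ) : B1728 p := ⟨0, 0, 1, 0⟩

/-- The basis element `k = ij = -ji` of `B1728 p`. -/
def qk (p : ℕ) : B1728 p := ⟨0, 0, 0, 1⟩

/-- The maximal order `O = ⟨1, i, (1+j)/2, (i+k)/2⟩_ℤ` in `(-1,-p|ℚ)`,
the endomorphism ring of `E₁₇₂₈`. -/
def O1728 (p : ℕ) : Submodule ℤ (B1728 p) :=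
  Submodule.span ℤ
    ({1, qi p, (2 : ℚ)⁻¹ • (1 + qj p), (2 : ℚ)⁻¹ • (qi p + qk p)} : Set (B1728 p))

/-! Anticommuting with `i` kills the `1`- and `i`-coordinates of `θ`. Writing
`θ = a + b i + c (1+j)/2 + d (i+k)/2`, these coordinates are `a + c/2` and `b + d/2`, so `c` and
`d` are even and `θ = -a j - b k`. In `(-1, -p | ℚ)` the reduced norm of `m j + n k` is
`p (m² + n²)`, which is at least `p` unless `m = n = 0`. -/

namespace QuaternionAlgebra

variable {R : Type*}

theorem re_self_mul_star [CommRing R] {c₁ c₂ : R} (x : ℍ[R,c₁,c₂]) :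
    (x * star x).re = x.re ^ 2 - c₁ * x.imI ^ 2 - c₂ * x.imJ ^ 2 + c₁ * c₂ * x.imK ^ 2 := by
  simp only [re_mul, re_star, imI_star, imJ_star, imK_star]
  ring

theorem mk_zero_one_mul_eq_neg_mul_iff [Field R] [NeZero (2 : R)] {c₁ c₂ : R} (hc₁ : c₁ ≠ 0)
    (x : ℍ[R,c₁,c₂]) : ⟨0, 1, 0, 0⟩ * x = -(x * ⟨0, 1, 0, 0⟩) ↔ x.re = 0 ∧ x.imI = 0 := by
  simp only [QuaternionAlgebra.ext_iff, re_mul, imI_mul, imJ_mul, imK_mul, re_neg, imI_neg,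
    imJ_neg, imK_neg]
  constructor
  · rintro ⟨h₁, hi, -, -⟩
    have hre : 2 * x.re = 0 := by linear_combination hi
    have himI : 2 * c₁ * x.imI = 0 := by linear_combination h₁
    simpa [hc₁, two_ne_zero] using And.intro hre himI
  · rintro ⟨hre, himI⟩
    simp [hre, himI]

end QuaternionAlgebra

theorem Int.one_le_sq_add_sq {m n : ℤ} (h : ¬(m = 0 ∧ n = 0)) : 1 ≤ m ^ 2 + n ^ 2 := by
  rw [← mul_self_add_mul_self_eq_zero, ← sq, ← sq] at h
  exact (add_nonneg (sq_nonneg m) (sq_nonneg n)).lt_of_ne' h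

theorem zsmul_qj_add_zsmul_qk (p : ℕ) (m n : ℤ) : m • qj p + n • qk p = ⟨0, 0, m, n⟩ := by
  ext <;> simp [qj, qk]

theorem exists_int_eq_mk_of_mem_O1728 {p : ℕ} {θ : B1728 p} (hθ : θ ∈ O1728 p) :
    ∃ a b c d : ℤ, θ = ⟨a + c / 2, b + d / 2, c / 2, d / 2⟩ := by
  simp only [O1728, Submodule.mem_span_insert, Submodule.mem_span_singleton] at hθ
  obtain ⟨a, -, ⟨b, -, ⟨c, -, ⟨d, rfl⟩, rfl⟩, rfl⟩, rfl⟩ := hθ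
  exact ⟨a, b, c, d, by ext <;> simp [qi, qj, qk] <;> ring⟩

theorem exists_int_eq_zsmul_qj_add_zsmul_qk {p : ℕ} {θ : B1728 p} (hθ : θ ∈ O1728 p)
    (hre : θ.re = 0) (himI : θ.imI = 0) : ∃ m n : ℤ, θ = m • qj p + n • qk p := by
  obtain ⟨a, b, c, d, rfl⟩ := exists_int_eq_mk_of_mem_O1728 hθ
  refine ⟨-a, -b, ?_⟩
  rw [zsmul_qj_add_zsmul_qk, QuaternionAlgebra.mk.injEq]
  push_cast
  exact ⟨hre, himI, by linarith, by linarith⟩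

theorem stmt_0_general (p : ℕ) (θ : B1728 p) (hθO : θ ∈ O1728 p) (hθ0 : θ ≠ 0)
    (hanti : qi p * θ = -(θ * qi p)) :
    ∃ m n : ℤ, θ = m • qj p + n • qk p ∧
      (θ * star θ).re = (p : ℚ) * ((m : ℚ) ^ 2 + (n : ℚ) ^ 2) ∧
      (p : ℚ) ≤ (θ * star θ).re := by
  obtain ⟨hre, himI⟩ :=
    (QuaternionAlgebra.mk_zero_one_mul_eq_neg_mul_iff (by norm_num) θ).mp hanti
  obtain ⟨m, n, rfl⟩ := exists_int_eq_zsmul_qj_add_zsmul_qk hθO hre himI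
  have hmn : ¬(m = 0 ∧ n = 0) := by
    rintro ⟨rfl, rfl⟩
    simp at hθ0
  have hnorm : ((m • qj p + n • qk p) * star (m • qj p + n • qk p)).re
      = (p : ℚ) * ((m : ℚ) ^ 2 + (n : ℚ) ^ 2) := by
    simp only [zsmul_qj_add_zsmul_qk, QuaternionAlgebra.re_self_mul_star]
    ring
  refine ⟨m, n, rfl, hnorm, ?_⟩
  rw [hnorm]
  exact le_mul_of_one_le_right p.cast_nonneg (by exact_mod_cast Int.one_le_sq_add_sq hmn)

/-- If a nonzero `θ` in the order `⟨1, i, (1+j)/2, (i+k)/2⟩_ℤ` of `(-1,-p|ℚ)` anticommutes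
with `i`, then `θ = m j + n k` with `m, n ∈ ℤ`, and its reduced norm is
`p (m² + n²) ≥ p`. -/
theorem stmt_0 (p : ℕ) (hp : p.Prime) (θ : B1728 p) (hθO : θ ∈ O1728 p) (hθ0 : θ ≠ 0)
    (hanti : qi p * θ = -(θ * qi p)) :
    ∃ m n : ℤ, θ = m • qj p + n • qk p ∧
      (θ * star θ).re = (p : ℚ) * ((m : ℚ) ^ 2 + (n : ℚ) ^ 2) ∧
      (p : ℚ) ≤ (θ * star θ).re :=
  stmt_0_general p θ hθO hθ0 hanti
end

section
/- Let ℓ be a prime and let G be a finite simple (ℓ+1)-regular graph on n vertices whose adjacency matrix A over ℝ satisfies ‖Aw‖₂ ≤ 2√ℓ · ‖w‖₂ for every w ∈ ℝ^V with ∑_{v∈V} w_v = 0. Let S be a nonempty set of vertices and j₁ any vertex. If t is a natural number with n · (2√ℓ/(ℓ+1))^t < √|S|, then there exists a walk of length exactly t in G starting at some vertex of S and ending at j₁. In particular, every vertex of G lies at distance at most t from S for every t > (log n)/log((ℓ+1)/(2√ℓ)). -/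
/-!
Let `A` be the adjacency matrix and `χ` the indicator vector of `S`, so that `(Aᵗ χ) j₁` counts
the walks of length `t` from `S` to `j₁`. Write `χ` as its mean `|S|/n` (a constant vector, which
`A` scales by `ℓ + 1`) plus a vector of zero sum, which `A` keeps of zero sum while shrinking its
`ℓ²`-norm by the factor `2√ℓ`. Hence `(Aᵗ χ) j₁ ≥ (ℓ+1)ᵗ |S|/n - (2√ℓ)ᵗ √|S|`, a lower bound
that is positive exactly when `n (2√ℓ/(ℓ+1))ᵗ < √|S|`. Since `√|S| ≥ 1`, the logarithmic bound
on `t` suffices.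
-/

open Finset
open scoped Matrix

lemma two_mul_sqrt_lt_add_one {x : ℝ} (hx : 0 ≤ x) (h1 : x ≠ 1) : 2 * √x < x + 1 := by
  have hsq : √x ^ 2 = x := Real.sq_sqrt hx
  have hne : √x ≠ 1 := fun h => h1 (by rw [← hsq, h, one_pow])
  have : 0 < (√x - 1) ^ 2 := by positivity [sub_ne_zero.mpr hne]
  nlinarith

lemma mul_pow_lt_one_of_log_div_log_inv_lt {x r : ℝ} (hx : 0 < x) (hr₀ : 0 < r) (hr₁ : r < 1)
    {t : ℕ} (ht : Real.log x / Real.log r⁻¹ < t) : x * r ^ t < 1 := by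
  rw [Real.log_div_log, Real.logb_lt_iff_lt_rpow (one_lt_inv_iff₀.mpr ⟨hr₀, hr₁⟩) hx,
    Real.rpow_natCast, inv_pow, ← one_div, lt_div_iff₀ (pow_pos hr₀ t)] at ht
  exact ht

lemma abs_le_sqrt_sum_sq {ι : Type*} [Fintype ι] (w : ι → ℝ) (i : ι) :
    |w i| ≤ √(∑ j, w j ^ 2) := by
  rw [← Real.sqrt_sq_eq_abs]
  exact Real.sqrt_le_sqrt (single_le_sum (fun j _ => sq_nonneg (w j)) (mem_univ i))

lemma sum_sub_mean_eq_zero {ι : Type*} [Fintype ι] [Nonempty ι] (w : ι → ℝ) :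
    ∑ i, (w i - (∑ j, w j) / Fintype.card ι) = 0 := by
  rw [sum_sub_distrib, sum_const, card_univ, nsmul_eq_mul,
    mul_div_cancel₀ _ (by positivity), sub_self]

lemma sum_sub_mean_sq_le {ι : Type*} [Fintype ι] (w : ι → ℝ) :
    ∑ i, (w i - (∑ j, w j) / Fintype.card ι) ^ 2 ≤ ∑ i, w i ^ 2 := by
  set m := (∑ j, w j) / Fintype.card ι
  have hexpand :
      ∑ i, (w i - m) ^ 2 = ∑ i, w i ^ 2 - m * (2 * ∑ j, w j - Fintype.card ι * m) := by
    simp only [sub_sq, sum_add_distrib, sum_sub_distrib, ← sum_mul, ← mul_sum, sum_const,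
      card_univ, nsmul_eq_mul]
    ring
  rcases isEmpty_or_nonempty ι with hι | hι
  · simp
  have : (Fintype.card ι : ℝ) * m = ∑ j, w j := mul_div_cancel₀ _ (by positivity)
  rw [hexpand, ← this]
  nlinarith [mul_nonneg (Nat.cast_nonneg (Fintype.card ι) : (0:ℝ) ≤ _) (sq_nonneg m)]

section
variable {V : Type*} [Fintype V]

theorem Matrix.sqrt_sum_sq_pow_mulVec_le [DecidableEq V] {A : Matrix V V ℝ} {μ : ℝ} (hμ : 0 ≤ μ)
    (hsum : ∀ w : V → ℝ, ∑ v, w v = 0 → ∑ v, (A *ᵥ w) v = 0)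
    (hnorm : ∀ w : V → ℝ, ∑ v, w v = 0 → √(∑ v, (A *ᵥ w) v ^ 2) ≤ μ * √(∑ v, w v ^ 2))
    (t : ℕ) {w : V → ℝ} (hw : ∑ v, w v = 0) :
    √(∑ v, (A ^ t *ᵥ w) v ^ 2) ≤ μ ^ t * √(∑ v, w v ^ 2) := by
  induction t generalizing w with
  | zero => simp
  | succ t ih =>
    calc √(∑ v, (A ^ (t + 1) *ᵥ w) v ^ 2)
        = √(∑ v, (A ^ t *ᵥ (A *ᵥ w)) v ^ 2) := by rw [pow_succ, Matrix.mulVec_mulVec]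
      _ ≤ μ ^ t * √(∑ v, (A *ᵥ w) v ^ 2) := ih (hsum w hw)
      _ ≤ μ ^ t * (μ * √(∑ v, w v ^ 2)) := by gcongr; exact hnorm w hw
      _ = μ ^ (t + 1) * √(∑ v, w v ^ 2) := by ring

namespace SimpleGraph
variable (G : SimpleGraph V) [DecidableRel G.Adj] {d : ℕ}

theorem sum_adjMatrix_mulVec_of_regular (hreg : G.IsRegularOfDegree d) (w : V → ℝ) :
    ∑ v, (G.adjMatrix ℝ *ᵥ w) v = d * ∑ v, w v :=
  calc ∑ v, (G.adjMatrix ℝ *ᵥ w) v = 1 ⬝ᵥ (G.adjMatrix ℝ *ᵥ w) := (one_dotProduct _).symm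
    _ = (1 ᵥ* G.adjMatrix ℝ) ⬝ᵥ w := Matrix.dotProduct_mulVec _ _ _
    _ = ∑ v, d * w v := by simp [dotProduct, hreg _]
    _ = d * ∑ v, w v := (mul_sum _ _ _).symm

theorem adjMatrix_pow_mulVec_const_of_regular [DecidableEq V] (hreg : G.IsRegularOfDegree d)
    (t : ℕ) (c : ℝ) :
    G.adjMatrix ℝ ^ t *ᵥ Function.const V c = Function.const V (d ^ t * c) := by
  induction t with
  | zero => simp
  | succ t ih =>
    ext v
    rw [pow_succ', ← Matrix.mulVec_mulVec, ih, adjMatrix_mulVec_const_apply_of_regular hreg]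
    simp only [Function.const_apply]
    ring

theorem exists_walk_length_eq_of_sum_adjMatrix_pow_pos [DecidableEq V] {S : Finset V} {j : V}
    {t : ℕ} (h : 0 < ∑ s ∈ S, (G.adjMatrix ℝ ^ t) j s) :
    ∃ s ∈ S, ∃ w : G.Walk s j, w.length = t := by
  obtain ⟨s, hs, hpos⟩ := exists_lt_of_sum_lt (f := fun _ => (0 : ℝ)) (by simpa using h)
  rw [adjMatrix_pow_apply_eq_card_walk, Nat.cast_pos, Fintype.card_pos_iff] at hpos
  obtain ⟨⟨w, hw⟩⟩ := hpos
  exact ⟨s, hs, w.reverse, by rw [Walk.length_reverse]; exact hw⟩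

theorem abs_adjMatrix_pow_mulVec_apply_sub_le [DecidableEq V] (hreg : G.IsRegularOfDegree d)
    {μ : ℝ} (hμ : 0 ≤ μ)
    (hram : ∀ w : V → ℝ, ∑ v, w v = 0 →
      √(∑ v, (G.adjMatrix ℝ *ᵥ w) v ^ 2) ≤ μ * √(∑ v, w v ^ 2))
    (t : ℕ) (w : V → ℝ) (j : V) :
    |(G.adjMatrix ℝ ^ t *ᵥ w) j - d ^ t * ((∑ v, w v) / Fintype.card V)|
      ≤ μ ^ t * √(∑ v, w v ^ 2) := by
  have : Nonempty V := ⟨j⟩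
  set m := (∑ v, w v) / Fintype.card V
  set w₀ : V → ℝ := fun v => w v - m
  have hw₀ : ∑ v, w₀ v = 0 := sum_sub_mean_eq_zero w
  have hsplit : (G.adjMatrix ℝ ^ t *ᵥ w) j = (G.adjMatrix ℝ ^ t *ᵥ w₀) j + d ^ t * m := by
    rw [show w = w₀ + Function.const V m by ext; simp [w₀], Matrix.mulVec_add,
      adjMatrix_pow_mulVec_const_of_regular G hreg]
    rfl
  calc |(G.adjMatrix ℝ ^ t *ᵥ w) j - d ^ t * m|
      = |(G.adjMatrix ℝ ^ t *ᵥ w₀) j| := by rw [hsplit, add_sub_cancel_right]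
    _ ≤ √(∑ v, (G.adjMatrix ℝ ^ t *ᵥ w₀) v ^ 2) := abs_le_sqrt_sum_sq _ j
    _ ≤ μ ^ t * √(∑ v, w₀ v ^ 2) :=
      Matrix.sqrt_sum_sq_pow_mulVec_le hμ
        (fun u hu => by rw [sum_adjMatrix_mulVec_of_regular G hreg, hu, mul_zero]) hram t hw₀
    _ ≤ μ ^ t * √(∑ v, w v ^ 2) := by
      gcongr μ ^ t * √?_
      exact sum_sub_mean_sq_le w

theorem exists_walk_length_eq_of_card_mul_lt [DecidableEq V] (hreg : G.IsRegularOfDegree d)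
    (hd : 0 < d) {μ : ℝ} (hμ : 0 ≤ μ)
    (hram : ∀ w : V → ℝ, ∑ v, w v = 0 →
      √(∑ v, (G.adjMatrix ℝ *ᵥ w) v ^ 2) ≤ μ * √(∑ v, w v ^ 2))
    {S : Finset V} {j : V} {t : ℕ} (ht : Fintype.card V * (μ / d) ^ t < √(#S : ℝ)) :
    ∃ s ∈ S, ∃ w : G.Walk s j, w.length = t := by
  set χ : V → ℝ := fun v => if v ∈ S then 1 else 0
  have hχ : (G.adjMatrix ℝ ^ t *ᵥ χ) j = ∑ s ∈ S, (G.adjMatrix ℝ ^ t) j s := by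
    simp [χ, Matrix.mulVec, dotProduct]
  have hsum : ∑ v, χ v = #S := by simp [χ]
  have hsq : ∑ v, χ v ^ 2 = #S := by simp [χ]
  have hn : (0 : ℝ) < Fintype.card V := by have : Nonempty V := ⟨j⟩; positivity
  have hS : 0 < √(#S : ℝ) := lt_of_le_of_lt (by positivity) ht
  have hmain : μ ^ t * √(#S : ℝ) < d ^ t * ((#S : ℝ) / Fintype.card V) := by
    rw [div_pow, mul_div_assoc', div_lt_iff₀ (by positivity)] at ht
    rw [mul_div_assoc', lt_div_iff₀ hn]
    calc μ ^ t * √(#S : ℝ) * Fintype.card V = (Fintype.card V * μ ^ t) * √(#S : ℝ) := by ring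
      _ < (√(#S : ℝ) * d ^ t) * √(#S : ℝ) := mul_lt_mul_of_pos_right ht hS
      _ = d ^ t * #S := by rw [mul_right_comm, Real.mul_self_sqrt (by positivity), mul_comm]
  have hdev := abs_adjMatrix_pow_mulVec_apply_sub_le G hreg hμ hram t χ j
  rw [hsum, hsq] at hdev
  apply exists_walk_length_eq_of_sum_adjMatrix_pow_pos
  linarith [abs_le.mp hdev]

end SimpleGraph
end

/-- In an `(ℓ+1)`-regular graph with the Ramanujan spectral bound, if
`n · (2√ℓ/(ℓ+1))^t < √|S|` then there is a walk of length exactly `t` from some vertex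
of `S` to any given vertex `j₁`; in particular every vertex is within distance `t` of `S`
once `t > log n / log((ℓ+1)/(2√ℓ))`. -/
theorem stmt_6 {V : Type*} [Fintype V] [DecidableEq V]
    (ℓ : ℕ) (hℓ : ℓ.Prime) (G : SimpleGraph V) [DecidableRel G.Adj]
    (hreg : G.IsRegularOfDegree (ℓ + 1))
    (hram : ∀ w : V → ℝ, (∑ v, w v) = 0 →
      Real.sqrt (∑ v, ((G.adjMatrix ℝ).mulVec w v) ^ 2)
        ≤ 2 * Real.sqrt ℓ * Real.sqrt (∑ v, (w v) ^ 2))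
    (S : Finset V) (hS : S.Nonempty) (j₁ : V) :
    (∀ t : ℕ, (Fintype.card V : ℝ) * (2 * Real.sqrt ℓ / ((ℓ : ℝ) + 1)) ^ t
        < Real.sqrt S.card →
      ∃ s ∈ S, ∃ w : G.Walk s j₁, w.length = t) ∧
    (∀ t : ℕ, Real.log (Fintype.card V) / Real.log (((ℓ : ℝ) + 1) / (2 * Real.sqrt ℓ))
        < (t : ℝ) →
      ∃ s ∈ S, ∃ w : G.Walk s j₁, w.length ≤ t) := by
  have hμ : 0 < 2 * √(ℓ : ℝ) := by have := hℓ.pos; positivity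
  have hμd : 2 * √(ℓ : ℝ) < ℓ + 1 :=
    two_mul_sqrt_lt_add_one (Nat.cast_nonneg ℓ) (by exact_mod_cast hℓ.one_lt.ne')
  have hexact : ∀ t : ℕ, (Fintype.card V : ℝ) * (2 * √(ℓ : ℝ) / ((ℓ : ℝ) + 1)) ^ t
      < √(#S : ℝ) → ∃ s ∈ S, ∃ w : G.Walk s j₁, w.length = t := fun t ht =>
    G.exists_walk_length_eq_of_card_mul_lt hreg ℓ.succ_pos hμ.le hram (by push_cast; exact ht)
  refine ⟨hexact, fun t ht => ?_⟩
  have hn : (0 : ℝ) < Fintype.card V := by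
    obtain ⟨s, -⟩ := hS
    have : Nonempty V := ⟨s⟩
    positivity
  have hsmall : (Fintype.card V : ℝ) * (2 * √(ℓ : ℝ) / ((ℓ : ℝ) + 1)) ^ t < 1 :=
    mul_pow_lt_one_of_log_div_log_inv_lt hn (by positivity)
      ((div_lt_one (by positivity)).mpr hμd) (by rwa [inv_div])
  have hone : 1 ≤ √(#S : ℝ) := Real.one_le_sqrt.mpr (by exact_mod_cast hS.card_pos)
  obtain ⟨s, hs, w, hw⟩ := hexact t (hsmall.trans_le hone)
  exact ⟨s, hs, w, hw.le⟩
end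

section
/- For every integer M ≥ 1, writing X = ⌊2√M⌋, one has ∑_{x=1}^{X} √(4M − x²) ≤ (1/2)·X·√(4M − X²) + 2M·arcsin(X/(2√M)) < 2·M^{3/4} + π·M. -/
open Finset Real

/-!
With `r = 2√M`, the summand `√(r² - x²)` is decreasing in `x ≥ 0`, so the sum is at most
`∫₀^X √(r² - t²) dt`, which the substitution `t = r sin θ` evaluates to
`X √(r² - X²)/2 + (r²/2) arcsin(X/r)`. Since `r - X < 1`, `r² - X² < 2r`, so the first term is
at most `r √(2r)/2 = 2 M^{3/4}`, and the arcsine term is at most `π r²/4 = π M`; one of the two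
bounds is strict according as `X < r` or `X = r`.
-/

theorem integral_sqrt_sq_sub_sq {r y : ℝ} (hr : 0 < r) (hy₁ : -r ≤ y) (hy₂ : y ≤ r) :
    ∫ t in (0:ℝ)..y, √(r ^ 2 - t ^ 2) = y * √(r ^ 2 - y ^ 2) / 2 + r ^ 2 / 2 * arcsin (y / r) := by
  set α := arcsin (y / r)
  have hsin : sin α = y / r :=
    sin_arcsin ((le_div_iff₀ hr).2 (by linarith)) ((div_le_one hr).2 hy₂)
  have hcos : cos α = √(r ^ 2 - y ^ 2) / r := by
    rw [cos_arcsin, div_pow, one_sub_div (by positivity), sqrt_div' _ (sq_nonneg r),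
      sqrt_sq hr.le]
  have hα : α ∈ Set.Icc (-(π / 2)) (π / 2) := ⟨neg_pi_div_two_le_arcsin _, arcsin_le_pi_div_two _⟩
  -- `t = r sin θ`; `cos θ ≥ 0` on `[-π/2, π/2]`, so `√(r² - t²) = r cos θ`
  have hsubst : ∫ t in (0:ℝ)..y, √(r ^ 2 - t ^ 2) = ∫ θ in (0:ℝ)..α, r ^ 2 * cos θ ^ 2 := by
    have := intervalIntegral.integral_comp_mul_deriv (a := 0) (b := α)
      (f := fun θ => r * sin θ) (g := fun t => √(r ^ 2 - t ^ 2))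
      (fun θ _ => (hasDerivAt_sin θ).const_mul r) (by fun_prop) (by fun_prop)
    simp only [Function.comp_def, hsin, mul_div_cancel₀ _ hr.ne', sin_zero, mul_zero] at this
    rw [← this]
    refine intervalIntegral.integral_congr fun θ hθ => ?_
    have hθ' : θ ∈ Set.Icc (-(π / 2)) (π / 2) :=
      Set.uIcc_subset_Icc ⟨by linarith [pi_pos], by linarith [pi_pos]⟩ hα hθ
    have hcosθ : 0 ≤ cos θ := cos_nonneg_of_mem_Icc hθ'
    have : r ^ 2 - (r * sin θ) ^ 2 = (r * cos θ) ^ 2 := by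
      linear_combination (-r ^ 2) * sin_sq_add_cos_sq θ
    simp only [this, sqrt_sq (mul_nonneg hr.le hcosθ)]
    ring
  rw [hsubst, intervalIntegral.integral_const_mul, integral_cos_sq, hcos, hsin, cos_zero,
    sin_zero]
  field_simp
  ring

theorem AntitoneOn.sum_Icc_le_integral {f : ℝ → ℝ} {n : ℕ} (hf : AntitoneOn f (Set.Icc 0 n)) :
    ∑ i ∈ Icc 1 n, f i ≤ ∫ x in (0:ℝ)..n, f x := by
  have := AntitoneOn.sum_le_integral (x₀ := 0) (a := n) (by simpa using hf)
  simp only [zero_add] at this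
  rw [← Finset.Ico_add_one_right_eq_Icc, sum_Ico_eq_sum_range, Nat.add_sub_cancel]
  simpa only [add_comm 1] using this

theorem antitoneOn_sqrt_sq_sub_sq (r : ℝ) : AntitoneOn (fun t => √(r ^ 2 - t ^ 2)) (Set.Ici 0) :=
  fun _ hu _ _ huv => sqrt_le_sqrt (by nlinarith [Set.mem_Ici.1 hu])

theorem floor_mul_sqrt_sq_sub_floor_sq_le {r : ℝ} (hr : 0 ≤ r) :
    ⌊r⌋₊ * √(r ^ 2 - ⌊r⌋₊ ^ 2) ≤ r * √(2 * r) := by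
  have hle : (⌊r⌋₊ : ℝ) ≤ r := Nat.floor_le hr
  have hlt : r < ⌊r⌋₊ + 1 := Nat.lt_floor_add_one r
  have hsq : r ^ 2 - ⌊r⌋₊ ^ 2 ≤ 2 * r := by nlinarith [(⌊r⌋₊).cast_nonneg (α := ℝ)]
  exact mul_le_mul hle (sqrt_le_sqrt hsq) (sqrt_nonneg _) hr

theorem floor_mul_sqrt_add_arcsin_lt {r : ℝ} (hr : 0 < r) :
    ⌊r⌋₊ * √(r ^ 2 - ⌊r⌋₊ ^ 2) / 2 + r ^ 2 / 2 * arcsin (⌊r⌋₊ / r)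
      < r * √(2 * r) / 2 + π * r ^ 2 / 4 := by
  have hfloor := floor_mul_sqrt_sq_sub_floor_sq_le hr.le
  have hr2 : 0 < r ^ 2 := by positivity
  rcases (Nat.floor_le hr.le).lt_or_eq with hlt | heq
  · have : arcsin (⌊r⌋₊ / r) < π / 2 := arcsin_lt_pi_div_two.2 ((div_lt_one hr).2 hlt)
    nlinarith
  · have : 0 < r * √(2 * r) := by positivity
    rw [heq, sub_self, sqrt_zero, div_self hr.ne', arcsin_one]
    nlinarith

/-- For `M ≥ 1` and `X = ⌊2√M⌋`, the sum `∑_{x=1}^{X} √(4M - x²)` is at most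
`(1/2)·X·√(4M - X²) + 2M·arcsin(X/(2√M))`, which is strictly less than
`2·M^(3/4) + π·M`. -/
theorem stmt_8 (M : ℕ) (hM : 1 ≤ M) :
    (∑ x ∈ Finset.Icc 1 (Nat.floor (2 * Real.sqrt M)),
        Real.sqrt (4 * M - (x : ℝ) ^ 2))
      ≤ (1 / 2) * (Nat.floor (2 * Real.sqrt M) : ℝ)
            * Real.sqrt (4 * M - (Nat.floor (2 * Real.sqrt M) : ℝ) ^ 2)
        + 2 * M * Real.arcsin ((Nat.floor (2 * Real.sqrt M) : ℝ) / (2 * Real.sqrt M)) ∧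
    (1 / 2) * (Nat.floor (2 * Real.sqrt M) : ℝ)
          * Real.sqrt (4 * M - (Nat.floor (2 * Real.sqrt M) : ℝ) ^ 2)
        + 2 * M * Real.arcsin ((Nat.floor (2 * Real.sqrt M) : ℝ) / (2 * Real.sqrt M))
      < 2 * (M : ℝ) ^ ((3 : ℝ) / 4) + Real.pi * M := by
  have hM0 : (0 : ℝ) < M := by exact_mod_cast hM
  set r : ℝ := 2 * √M with hr
  have hr0 : 0 < r := by positivity
  have hr2 : (4 * M : ℝ) = r ^ 2 := by rw [hr, mul_pow, sq_sqrt hM0.le]; norm_num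
  have hclosed : (1 / 2) * (⌊r⌋₊ : ℝ) * √(4 * M - (⌊r⌋₊ : ℝ) ^ 2) + 2 * M * arcsin (⌊r⌋₊ / r)
      = ⌊r⌋₊ * √(r ^ 2 - ⌊r⌋₊ ^ 2) / 2 + r ^ 2 / 2 * arcsin (⌊r⌋₊ / r) := by
    rw [← hr2]; ring
  have hpow : r * √(2 * r) / 2 = 2 * (M : ℝ) ^ ((3 : ℝ) / 4) := by
    rw [hr, show 2 * (2 * √M) = 2 ^ 2 * √M by ring, sqrt_mul (by norm_num), sqrt_sq (by norm_num),
      sqrt_eq_rpow, sqrt_eq_rpow, ← rpow_mul hM0.le,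
      show (3 : ℝ) / 4 = 1 / 2 + 1 / 2 * (1 / 2) by norm_num, rpow_add hM0]
    ring
  rw [hclosed]
  constructor
  · rw [← integral_sqrt_sq_sub_sq hr0 (by linarith [(⌊r⌋₊).cast_nonneg (α := ℝ)])
      (Nat.floor_le hr0.le), hr2]
    exact ((antitoneOn_sqrt_sq_sub_sq r).mono Set.Icc_subset_Ici_self).sum_Icc_le_integral
  · calc _ < r * √(2 * r) / 2 + π * r ^ 2 / 4 := floor_mul_sqrt_add_arcsin_lt hr0
      _ = _ := by rw [hpow, ← hr2]; ring
end

section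
/- Let G be a finite group, H ≤ G an abelian subgroup of index 2, and τ ∈ G∖H an element with τ² = 1 and τστ⁻¹ = σ⁻¹ for all σ ∈ H. Suppose G acts transitively on a finite set X with |X| = |H| and that the induced action of H on X is free. Then: (i) every point stabilizer has order 2; (ii) there exists σ₀ ∈ H such that the set of all non-identity elements of point stabilizers, taken over all points of X, equals the coset H²σ₀τ, where H² = {h² : h ∈ H}; (iii) there are exactly |H²| distinct point-stabilizer subgroups, and each of them is the stabilizer of exactly [H : H²] points of X; (iv) σ₀ ∉ H² if and only if no point of X is fixed by τ. -/
/-- Dihedral-type action: `G` finite, `H ≤ G` abelian of index 2, `τ ∉ H` with `τ² = 1`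
and `τστ⁻¹ = σ⁻¹` for `σ ∈ H`; `G` acts transitively on `X` with `|X| = |H|` and the
`H`-action free. Then (i) every point stabilizer has order 2; (ii) the non-identity
stabilizer elements form a coset `H²σ₀τ`; (iii) there are `|H²|` distinct stabilizer
subgroups, each stabilizing exactly `[H:H²]` points; (iv) `σ₀ ∉ H²` iff `τ` fixes no
point. -/
theorem stmt_10 {G X : Type*} [Group G] [Finite G] [Finite X] [MulAction G X]
    (H : Subgroup G) (hab : ∀ a b : H, a * b = b * a) (hidx : H.index = 2)
    (τ : G) (hτH : τ ∉ H) (hτ2 : τ * τ = 1)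
    (hconj : ∀ σ ∈ H, τ * σ * τ⁻¹ = σ⁻¹)
    (htrans : MulAction.IsPretransitive G X)
    (hcard : Nat.card X = Nat.card H)
    (hfree : ∀ h ∈ H, ∀ x : X, h • x = x → h = 1) :
    (∀ x : X, Nat.card (MulAction.stabilizer G x) = 2) ∧
    ∃ σ₀ ∈ H,
      ({g : G | g ≠ 1 ∧ ∃ x : X, g • x = x}
          = {g : G | ∃ h ∈ H, g = h * h * σ₀ * τ}) ∧
      (Nat.card {K : Subgroup G | ∃ x : X, K = MulAction.stabilizer G x}
          = Nat.card {g : G | ∃ h ∈ H, g = h * h}) ∧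
      (∀ x : X, Nat.card {y : X | MulAction.stabilizer G y = MulAction.stabilizer G x}
          = Nat.card H / Nat.card {g : G | ∃ h ∈ H, g = h * h}) ∧
      ((σ₀ ∉ {g : G | ∃ h ∈ H, g = h * h}) ↔ ∀ x : X, τ • x ≠ x) := by
  classical
  have hτinv : τ⁻¹ = τ := inv_eq_of_mul_eq_one_right hτ2
  have hHpos : 0 < Nat.card H := Nat.card_pos
  have hXpos : 0 < Nat.card X := by rw [hcard]; exact hHpos
  obtain ⟨x₀⟩ : Nonempty X := (Nat.card_pos_iff.mp hXpos).1
  have hcardG : Nat.card G = 2 * Nat.card H := by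
    rw [← H.index_mul_card, hidx]
  -- (i)
  have hstab2 : ∀ x : X, Nat.card (MulAction.stabilizer G x) = 2 := by
    intro x
    have h1 : (MulAction.stabilizer G x).index = Nat.card X :=
      MulAction.index_stabilizer_of_transitive G x
    have h2 := (MulAction.stabilizer G x).index_mul_card
    rw [h1, hcard, hcardG, mul_comm 2] at h2
    exact Nat.eq_of_mul_eq_mul_left hHpos h2
  -- uniqueness of the non-identity stabilizer element
  have huniq : ∀ x : X, ∀ g g' : G, g ∈ MulAction.stabilizer G x → g ≠ 1 →
      g' ∈ MulAction.stabilizer G x → g' ≠ 1 → g = g' := by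
    intro x g g' hg hgne hg' hg'ne
    obtain ⟨y, -, hy⟩ := (Nat.card_eq_two_iff' (1 : MulAction.stabilizer G x)).mp (hstab2 x)
    have e1 : (⟨g, hg⟩ : MulAction.stabilizer G x) = y :=
      hy ⟨g, hg⟩ (fun h => hgne (by simpa using congrArg Subtype.val h))
    have e2 : (⟨g', hg'⟩ : MulAction.stabilizer G x) = y :=
      hy ⟨g', hg'⟩ (fun h => hg'ne (by simpa using congrArg Subtype.val h))
    have := e1.trans e2.symm
    simpa using congrArg Subtype.val this
  have hex : ∀ x : X, ∃ g : G, g ∈ MulAction.stabilizer G x ∧ g ≠ 1 := by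
    intro x
    obtain ⟨y, hy1, -⟩ := (Nat.card_eq_two_iff' (1 : MulAction.stabilizer G x)).mp (hstab2 x)
    exact ⟨y, y.2, fun h => hy1 (Subtype.ext h)⟩
  obtain ⟨g₀, hg₀mem, hg₀ne⟩ := hex x₀
  have hg₀H : g₀ ∉ H := fun h => hg₀ne (hfree g₀ h x₀ hg₀mem)
  obtain ⟨σ₀, hσ₀def⟩ : ∃ s : G, s = g₀ * τ := ⟨_, rfl⟩
  have hσ₀H : σ₀ ∈ H := by
    rw [hσ₀def]
    exact (H.mul_mem_iff_of_index_two hidx).mpr (iff_of_false hg₀H hτH)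
  have hg₀eq : g₀ = σ₀ * τ := by
    rw [hσ₀def, mul_assoc, hτ2, mul_one]
  have hτcomm : ∀ k : G, k ∈ H → τ * k = k⁻¹ * τ := by
    intro k hk
    have h := hconj k hk
    rw [hτinv] at h
    calc τ * k = τ * k * (τ * τ) := by rw [hτ2, mul_one]
      _ = (τ * k * τ) * τ := by group
      _ = k⁻¹ * τ := by rw [h]
  -- conjugate of g₀ by k ∈ H
  have hconjf : ∀ k : H, (k : G) * g₀ * (k : G)⁻¹ = (k : G) * k * σ₀ * τ := by
    intro k
    have h1 : τ * (k : G)⁻¹ = (k : G) * τ := by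
      rw [hτcomm _ (H.inv_mem k.2), inv_inv]
    have h2 : σ₀ * (k : G) = (k : G) * σ₀ := by
      have := hab ⟨σ₀, hσ₀H⟩ k
      simpa [Subtype.ext_iff] using this
    calc (k : G) * g₀ * (k : G)⁻¹ = (k : G) * (σ₀ * (τ * (k : G)⁻¹)) := by
          rw [hg₀eq]; group
      _ = (k : G) * ((σ₀ * (k : G)) * τ) := by rw [h1, mul_assoc]
      _ = (k : G) * (((k : G) * σ₀) * τ) := by rw [h2]
      _ = (k : G) * k * σ₀ * τ := by group
  have hnotH : ∀ h : G, h ∈ H → h * h * σ₀ * τ ∉ H := by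
    intro h hh hmem
    have h1 : (h * h * σ₀)⁻¹ * (h * h * σ₀ * τ) = τ := by group
    have : τ ∈ H := by
      rw [← h1]
      exact H.mul_mem (H.inv_mem (H.mul_mem (H.mul_mem hh hh) hσ₀H)) hmem
    exact hτH this
  have hne1 : ∀ h : G, h ∈ H → h * h * σ₀ * τ ≠ 1 := by
    intro h hh e
    exact hnotH h hh (by rw [e]; exact H.one_mem)
  -- the map H → X, k ↦ k • x₀, is bijective
  have hφbij : Function.Bijective (fun k : H => (k : G) • x₀) := by
    refine (Nat.bijective_iff_injective_and_card _).mpr ⟨?_, hcard.symm⟩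
    intro a b hab'
    have hab2 : (a : G) • x₀ = (b : G) • x₀ := hab'
    have h0 : ((b : G)⁻¹ * a) • x₀ = x₀ := by
      rw [mul_smul, hab2, ← mul_smul, inv_mul_cancel, one_smul]
    have h1 : (b : G)⁻¹ * a = 1 := hfree _ (H.mul_mem (H.inv_mem b.2) a.2) x₀ h0
    exact Subtype.ext (inv_mul_eq_one.mp h1).symm
  -- stabilizer description
  have hstabmem : ∀ (k : H) (g : G),
      g ∈ MulAction.stabilizer G ((k : G) • x₀) ↔ g = 1 ∨ g = (k : G) * k * σ₀ * τ := by
    intro k g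
    have hg₀fix : g₀ • x₀ = x₀ := hg₀mem
    have hmem2 : (k : G) * k * σ₀ * τ ∈ MulAction.stabilizer G ((k : G) • x₀) := by
      rw [← hconjf k, MulAction.mem_stabilizer_iff, smul_smul]
      have h3 : (k : G) * g₀ * (k : G)⁻¹ * (k : G) = (k : G) * g₀ := by group
      rw [h3, mul_smul, hg₀fix]
    constructor
    · intro hg
      by_cases h1 : g = 1
      · exact Or.inl h1
      · exact Or.inr (huniq _ g _ hg h1 hmem2 (hne1 _ k.2))
    · rintro (rfl | rfl)
      · exact (MulAction.stabilizer G _).one_mem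
      · exact hmem2
  have hstabEq : ∀ k m : H,
      MulAction.stabilizer G ((k : G) • x₀) = MulAction.stabilizer G ((m : G) • x₀) ↔
        (k : G) * k = (m : G) * m := by
    intro k m
    constructor
    · intro he
      have h1 : (k : G) * k * σ₀ * τ ∈ MulAction.stabilizer G ((m : G) • x₀) := by
        rw [← he]
        exact (hstabmem k _).mpr (Or.inr rfl)
      rcases (hstabmem m _).mp h1 with h | h
      · exact absurd h (hne1 _ k.2)
      · exact mul_right_cancel (mul_right_cancel h)
    · intro he
      ext g
      rw [hstabmem, hstabmem, he]
  -- part (ii)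
  have hset2 : {g : G | g ≠ 1 ∧ ∃ x : X, g • x = x}
      = {g : G | ∃ h ∈ H, g = h * h * σ₀ * τ} := by
    ext g
    simp only [Set.mem_setOf_eq]
    constructor
    · rintro ⟨hgne, x, hgx⟩
      obtain ⟨k, hk⟩ := hφbij.2 x
      subst hk
      rcases (hstabmem k g).mp hgx with h | h
      · exact absurd h hgne
      · exact ⟨k, k.2, h⟩
    · rintro ⟨h, hh, rfl⟩
      refine ⟨hne1 h hh, ((⟨h, hh⟩ : H) : G) • x₀, ?_⟩
      exact (hstabmem ⟨h, hh⟩ _).mpr (Or.inr rfl)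
  -- ranges
  have hrange1 : {K : Subgroup G | ∃ x : X, K = MulAction.stabilizer G x}
      = Set.range (fun k : H => MulAction.stabilizer G ((k : G) • x₀)) := by
    ext K
    simp only [Set.mem_setOf_eq, Set.mem_range]
    constructor
    · rintro ⟨x, rfl⟩
      obtain ⟨k, hk⟩ := hφbij.2 x
      exact ⟨k, congrArg (MulAction.stabilizer G) hk⟩
    · rintro ⟨k, rfl⟩
      exact ⟨(k : G) • x₀, rfl⟩
  have hrange2 : {g : G | ∃ h ∈ H, g = h * h} = Set.range (fun k : H => (k : G) * k) := by
    ext g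
    simp only [Set.mem_setOf_eq, Set.mem_range]
    constructor
    · rintro ⟨h, hh, rfl⟩
      exact ⟨⟨h, hh⟩, rfl⟩
    · rintro ⟨k, rfl⟩
      exact ⟨k, k.2, rfl⟩
  -- part (iii) first clause
  have hcard1 : Nat.card {K : Subgroup G | ∃ x : X, K = MulAction.stabilizer G x}
      = Nat.card {g : G | ∃ h ∈ H, g = h * h} := by
    rw [hrange1, hrange2]
    refine Nat.card_congr (((Setoid.quotientKerEquivRange _).symm.trans
      ((Quotient.congrRight fun a b => ?_).trans (Setoid.quotientKerEquivRange _))))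
    show MulAction.stabilizer G ((a : G) • x₀) = MulAction.stabilizer G ((b : G) • x₀) ↔
      (a : G) * a = (b : G) * b
    exact hstabEq a b
  -- the squaring homomorphism
  let sqHom : H →* G :=
    { toFun := fun k => (k : G) * k
      map_one' := by simp
      map_mul' := by
        intro a b
        have hcomm : (b : G) * a = (a : G) * b := by
          have := hab b a
          simpa [Subtype.ext_iff] using this
        push_cast
        calc ((a : G) * b) * ((a : G) * b) = (a : G) * ((b : G) * a) * b := by group
          _ = (a : G) * ((a : G) * b) * b := by rw [hcomm]
          _ = (a : G) * a * ((b : G) * b) := by group }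
  have hker_range : Nat.card H
      = Nat.card (Set.range (fun k : H => (k : G) * k)) * Nat.card sqHom.ker := by
    have h1 := Subgroup.card_eq_card_quotient_mul_card_subgroup sqHom.ker
    have h2 : Nat.card (H ⧸ sqHom.ker) = Nat.card sqHom.range :=
      Nat.card_congr (QuotientGroup.quotientKerEquivRange sqHom).toEquiv
    have h3 : Nat.card sqHom.range = Nat.card (Set.range (fun k : H => (k : G) * k)) := by
      apply Nat.card_congr
      apply Equiv.setCongr
      exact MonoidHom.coe_range sqHom
    rw [h1, h2, h3]
  have hrangepos : 0 < Nat.card (Set.range (fun k : H => (k : G) * k)) := by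
    have : Nonempty (Set.range (fun k : H => (k : G) * k)) := ⟨⟨_, ⟨1, rfl⟩⟩⟩
    exact Nat.card_pos
  have hfiber : ∀ k : H, Nat.card {m : H | (m : G) * m = (k : G) * k}
      = Nat.card sqHom.ker := by
    intro k
    apply Nat.card_congr
    refine ⟨fun m => ⟨k⁻¹ * m.1, ?_⟩, fun n => ⟨k * n.1, ?_⟩, ?_, ?_⟩
    · have hm : (m.1 : G) * m.1 = (k : G) * k := m.2
      have : sqHom (k⁻¹ * m.1) = 1 := by
        rw [map_mul, map_inv]
        show ((k : G) * k)⁻¹ * ((m.1 : G) * m.1) = 1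
        rw [hm, inv_mul_cancel]
      exact this
    · have hn : sqHom n.1 = 1 := n.2
      show sqHom (k * n.1) = sqHom k
      rw [map_mul, hn, mul_one]
    · intro m
      apply Subtype.ext
      simp
    · intro n
      apply Subtype.ext
      simp
  -- part (iii) second clause
  have hpart3 : ∀ x : X, Nat.card {y : X | MulAction.stabilizer G y = MulAction.stabilizer G x}
      = Nat.card H / Nat.card {g : G | ∃ h ∈ H, g = h * h} := by
    intro x
    obtain ⟨k, hk⟩ := hφbij.2 x
    subst hk
    have he : Nat.card {y : X | MulAction.stabilizer G y
          = MulAction.stabilizer G ((k : G) • x₀)}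
        = Nat.card {m : H | (m : G) * m = (k : G) * k} := by
      refine Nat.card_congr (((Equiv.ofBijective _ hφbij).subtypeEquiv
        (fun m => ?_)).symm)
      exact (hstabEq m k).symm
    rw [he, hfiber k, hrange2, hker_range, Nat.mul_div_cancel_left _ hrangepos]
  -- part (iv)
  have hpart4 : (σ₀ ∉ {g : G | ∃ h ∈ H, g = h * h}) ↔ ∀ x : X, τ • x ≠ x := by
    constructor
    · intro hn x hx
      obtain ⟨k, hk⟩ := hφbij.2 x
      subst hk
      rcases (hstabmem k τ).mp hx with h | h
      · exact hτH (by rw [h]; exact H.one_mem)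
      · have h1 : (1 : G) * τ = ((k : G) * k * σ₀) * τ := by rw [one_mul, ← h]
        have h2 : (k : G) * k * σ₀ = 1 := (mul_right_cancel h1).symm
        have h3 : σ₀ = ((k : G))⁻¹ * ((k : G))⁻¹ := by
          have h4 := congrArg (fun z => ((k : G))⁻¹ * (((k : G))⁻¹ * z)) h2
          simpa [mul_assoc] using h4
        exact hn ⟨(k : G)⁻¹, H.inv_mem k.2, h3⟩
    · intro hno hmem
      obtain ⟨h, hh, hσ⟩ := hmem
      refine hno (((⟨h, hh⟩⁻¹ : H) : G) • x₀) ?_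
      refine (hstabmem (⟨h, hh⟩⁻¹ : H) τ).mpr (Or.inr ?_)
      show τ = h⁻¹ * h⁻¹ * σ₀ * τ
      rw [hσ]
      group
  exact ⟨hstab2, σ₀, hσ₀H, hset2, hcard1, hpart3, hpart4⟩
end

section
/- Let G be a finite group, H ≤ G an abelian subgroup of index 2, and τ ∈ G∖H an element with τ² = 1 and τστ⁻¹ = σ⁻¹ for all σ ∈ H. Suppose G acts transitively on a finite set X with |X| = |H|, that the induced action of H on X is free, and that τ fixes no point of X. Let g ∈ H be an element such that gτ fixes some point of X, and let r be the order of g. Then r is even, [H : H²] is even, and the number of orbits of the cyclic group ⟨g⟩ on X that are mapped to themselves by τ equals [H : H²]/2, where H² = {h² : h ∈ H}. -/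
/-- The squaring homomorphism on an abelian subgroup, valued in the ambient group. -/
private def sqHom {G : Type*} [Group G] (H : Subgroup G)
    (hab : ∀ a b : H, a * b = b * a) : H →* G where
  toFun h := (h : G) * (h : G)
  map_one' := by simp
  map_mul' a b := by
    have h : (a : G) * b = (b : G) * a := Subtype.ext_iff.mp (hab a b)
    push_cast
    rw [mul_assoc, ← mul_assoc (b : G), ← h, mul_assoc, ← mul_assoc]

/-- Dihedral-type action as in the ramified case of Theorem 5.1: `G` finite, `H ≤ G`
abelian of index 2, `τ ∉ H` with `τ² = 1` inverting `H` by conjugation, `G` acting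
transitively on `X` with `|X| = |H|`, the `H`-action free, and `τ` fixing no point.
If `g ∈ H` has order `r` and `gτ` fixes some point, then `r` and the genus number
`[H : H²]` are even, and the number of `⟨g⟩`-orbits on `X` stable under `τ` equals
`[H : H²]/2`. -/
theorem stmt_12 {G X : Type*} [Group G] [Finite G] [Finite X] [MulAction G X]
    (H : Subgroup G) (hab : ∀ a b : H, a * b = b * a) (hidx : H.index = 2)
    (τ : G) (hτH : τ ∉ H) (hτ2 : τ * τ = 1)
    (hconj : ∀ σ ∈ H, τ * σ * τ⁻¹ = σ⁻¹)
    (htrans : MulAction.IsPretransitive G X)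
    (hcard : Nat.card X = Nat.card H)
    (hfree : ∀ h ∈ H, ∀ x : X, h • x = x → h = 1)
    (hτfix : ∀ x : X, τ • x ≠ x)
    (g : G) (hg : g ∈ H) (hfix : ∃ x : X, (g * τ) • x = x)
    (r : ℕ) (hr : orderOf g = r) :
    Even r ∧
    Even (Nat.card H / Nat.card {a : G | ∃ h ∈ H, a = h * h}) ∧
    Nat.card {O : Set X // (∃ x : X, O = {y : X | ∃ n : ℤ, y = g ^ n • x}) ∧
        (fun y => τ • y) '' O = O}
      = Nat.card H / Nat.card {a : G | ∃ h ∈ H, a = h * h} / 2 := by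
  classical
  obtain ⟨x₀, hx₀⟩ := hfix
  have hcomm : ∀ a ∈ H, ∀ b ∈ H, a * b = b * a := fun a ha b hb =>
    Subtype.ext_iff.mp (hab ⟨a, ha⟩ ⟨b, hb⟩)
  have hgpow : ∀ n : ℤ, g ^ n ∈ H := fun n => H.zpow_mem hg n
  have hτx₀ : τ • x₀ = g⁻¹ • x₀ := by
    have h := hx₀
    rw [mul_smul] at h
    rw [eq_inv_smul_iff]
    exact h
  -- action of τ on points written in terms of x₀
  have key1 : ∀ h ∈ H, τ • (h • x₀) = (h⁻¹ * g⁻¹) • x₀ := by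
    intro h hh
    have hτh : τ * h = h⁻¹ * τ := by
      have := hconj h hh
      rw [← this]; group
    rw [smul_smul, hτh, mul_smul, hτx₀, smul_smul]
  -- freeness at x₀
  have key2 : ∀ a ∈ H, ∀ b ∈ H, a • x₀ = b • x₀ → a = b := by
    intro a ha b hb hab'
    have : (b⁻¹ * a) • x₀ = x₀ := by
      rw [mul_smul, hab', ← mul_smul, inv_mul_cancel, one_smul]
    have h1 := hfree _ (mul_mem (inv_mem hb) ha) x₀ this
    exact (inv_mul_eq_one.mp h1).symm
  -- g is not a square of an element of H
  have key3 : ∀ w ∈ H, g ≠ w * w := by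
    intro w hw hgw
    apply hτfix (w⁻¹ • x₀)
    rw [key1 _ (inv_mem hw)]
    congr 1
    rw [hgw]; group
  have hgr : g ^ r = 1 := by rw [← hr]; exact pow_orderOf_eq_one g
  have hrpos : 0 < r := hr ▸ orderOf_pos g
  -- r is even
  have hreven : Even r := by
    by_contra hodd
    rw [Nat.not_even_iff_odd] at hodd
    obtain ⟨m, hm⟩ := hodd
    apply key3 (g ^ (m + 1)) (H.pow_mem hg _)
    rw [← pow_add]
    have : m + 1 + (m + 1) = r + 1 := by omega
    rw [this, pow_succ, hgr, one_mul]
  obtain ⟨s, hs⟩ := hreven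
  have hspos : 0 < s := by omega
  -- if h² is a power of g, the exponent is even
  have key5 : ∀ h ∈ H, ∀ k : ℤ, h * h = g ^ k → ∃ t : ℤ, k = 2 * t := by
    intro h hh k hk
    rcases Int.even_or_odd k with ⟨t, ht⟩ | ⟨t, ht⟩
    · exact ⟨t, by omega⟩
    · exfalso
      apply key3 (h * g ^ (-t)) (mul_mem hh (hgpow _))
      have hc : g ^ (-t) * h = h * g ^ (-t) := hcomm _ (hgpow _) _ hh
      rw [mul_assoc, ← mul_assoc (g ^ (-t)), hc, mul_assoc, ← zpow_add,
        ← mul_assoc, hk, ← zpow_add]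
      have : k + (-t + -t) = 1 := by omega
      rw [this, zpow_one]
  -- every point is in the H-orbit of x₀
  have key6 : ∀ x : X, ∃ h ∈ H, x = h • x₀ := by
    intro x
    obtain ⟨a, ha⟩ := htrans.exists_smul_eq x₀ x
    by_cases haH : a ∈ H
    · exact ⟨a, haH, ha.symm⟩
    · obtain ⟨c, hc⟩ := Subgroup.index_eq_two_iff.mp hidx
      have hτc : τ * c ∈ H := by
        rcases hc τ with ⟨h1, _⟩ | ⟨h1, _⟩
        · exact h1
        · exact absurd h1 hτH
      have hac : a * c ∈ H := by
        rcases hc a with ⟨h1, _⟩ | ⟨h1, _⟩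
        · exact h1
        · exact absurd h1 haH
      have hcτ : c⁻¹ * τ ∈ H := by
        have := inv_mem hτc
        have hτi : τ⁻¹ = τ := inv_eq_of_mul_eq_one_right hτ2
        rwa [mul_inv_rev, hτi] at this
      have haτ : a * τ ∈ H := by
        have := mul_mem hac hcτ
        rwa [mul_assoc, ← mul_assoc c, mul_inv_cancel, one_mul] at this
      refine ⟨a * τ * g⁻¹, mul_mem haτ (inv_mem hg), ?_⟩
      rw [mul_smul, mul_smul, ← hτx₀, ← mul_smul, ← mul_smul, mul_assoc, hτ2,
        mul_one, ha]
  -- the squaring homomorphism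
  set f : H →* G := sqHom H hab with hf
  have hfval : ∀ h : H, f h = (h : G) * h := fun _ => rfl
  -- the set of squares is the range of f
  have hsetsq : {a : G | ∃ h ∈ H, a = h * h} = (f.range : Set G) := by
    ext a
    simp only [Set.mem_setOf_eq, SetLike.mem_coe, MonoidHom.mem_range]
    constructor
    · rintro ⟨h, hh, rfl⟩; exact ⟨⟨h, hh⟩, rfl⟩
    · rintro ⟨⟨h, hh⟩, rfl⟩; exact ⟨h, hh, rfl⟩
  have hHcard : Nat.card H = Nat.card f.range * Nat.card f.ker := by
    rw [← Nat.card_congr (QuotientGroup.quotientKerEquivRange f).toEquiv]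
    exact Subgroup.card_eq_card_quotient_mul_card_subgroup f.ker
  have hrangepos : 0 < Nat.card f.range := Nat.card_pos
  have hdiv : Nat.card H / Nat.card f.range = Nat.card f.ker := by
    rw [hHcard, Nat.mul_div_cancel_left _ hrangepos]
  -- the element of order 2 in the kernel
  have hgH : (⟨g, hg⟩ : H) ^ s = ⟨g ^ s, H.pow_mem hg s⟩ := by
    ext; simp
  have hes : f (⟨g, hg⟩ ^ s) = 1 := by
    rw [hfval, hgH]
    show g ^ s * g ^ s = 1
    rw [← pow_add, ← hs, hgr]
  set e : f.ker := ⟨⟨g, hg⟩ ^ s, hes⟩ with he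
  haveI : Fact (Nat.Prime 2) := ⟨by norm_num⟩
  have hecoe : ((e : H) : G) = g ^ s := by rw [he]; simp [hgH]
  have horde : orderOf e = 2 := by
    apply orderOf_eq_prime
    · refine Subtype.ext (Subtype.ext ?_)
      push_cast [hecoe]
      rw [← pow_mul, show s * 2 = r by omega, hgr]
    · intro he1
      have hgs : g ^ s = 1 := by rw [← hecoe, he1]; rfl
      have := orderOf_dvd_of_pow_eq_one hgs
      rw [hr] at this
      have := Nat.le_of_dvd hspos this
      omega
  have hZcard : Nat.card (Subgroup.zpowers e) = 2 := by
    rw [Nat.card_zpowers, horde]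
  have hKcard : Nat.card f.ker = Nat.card (f.ker ⧸ Subgroup.zpowers e) * 2 := by
    rw [← hZcard]
    exact Subgroup.card_eq_card_quotient_mul_card_subgroup _
  -- orbit translation
  have horb : ∀ (x : X) (m : ℤ),
      {y : X | ∃ n : ℤ, y = g ^ n • (g ^ m • x)} = {y : X | ∃ n : ℤ, y = g ^ n • x} := by
    intro x m
    ext y
    simp only [Set.mem_setOf_eq]
    constructor
    · rintro ⟨n, rfl⟩
      exact ⟨n + m, by rw [smul_smul, ← zpow_add]⟩
    · rintro ⟨n, rfl⟩
      refine ⟨n - m, ?_⟩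
      rw [smul_smul, ← zpow_add, sub_add_cancel]
  -- coercion facts about kernel elements
  have hu2 : ∀ u : f.ker, ((u : H) : G) * ((u : H) : G) = 1 := by
    intro u
    have := u.2
    rwa [MonoidHom.mem_ker, hfval] at this
  have huH : ∀ u : f.ker, ((u : H) : G) ∈ H := fun u => (u : H).2
  have huinv : ∀ u : f.ker, ((u : H) : G)⁻¹ = ((u : H) : G) :=
    fun u => inv_eq_of_mul_eq_one_right (hu2 u)
  -- stability of orbits of kernel elements
  have hstable : ∀ c : G, c ∈ H → c * c = 1 →
      (fun y => τ • y) '' {y : X | ∃ n : ℤ, y = g ^ n • (c • x₀)}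
        = {y : X | ∃ n : ℤ, y = g ^ n • (c • x₀)} := by
    intro c hcH hc2
    have hcinv : c⁻¹ = c := inv_eq_of_mul_eq_one_right hc2
    have hmem : ∀ y ∈ {y : X | ∃ n : ℤ, y = g ^ n • (c • x₀)},
        τ • y ∈ {y : X | ∃ n : ℤ, y = g ^ n • (c • x₀)} := by
      rintro y ⟨n, rfl⟩
      refine ⟨-n - 1, ?_⟩
      rw [← mul_smul (g ^ n) c x₀, key1 _ (mul_mem (hgpow n) hcH), smul_smul]
      congr 1
      rw [mul_inv_rev, hcinv, ← zpow_neg, mul_assoc, ← zpow_sub_one]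
      exact hcomm _ hcH _ (hgpow _)
    apply Set.Subset.antisymm
    · rintro _ ⟨y, hy, rfl⟩
      exact hmem y hy
    · intro y hy
      refine ⟨τ • y, hmem y hy, ?_⟩
      show τ • τ • y = y
      rw [smul_smul, hτ2, one_smul]
  -- the map from the kernel to stable orbits
  set SO := {O : Set X // (∃ x : X, O = {y : X | ∃ n : ℤ, y = g ^ n • x}) ∧
      (fun y => τ • y) '' O = O} with hSO
  set F : f.ker → SO := fun u =>
    ⟨{y : X | ∃ n : ℤ, y = g ^ n • (((u : H) : G) • x₀)},
      ⟨((u : H) : G) • x₀, rfl⟩, hstable _ (huH u) (hu2 u)⟩ with hF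
  -- F respects the quotient by zpowers e
  have hecoe : ((e : H) : G) = g ^ s := by rw [he]; simp only [hgH]
  have hFcompat : ∀ u v : f.ker, u⁻¹ * v ∈ Subgroup.zpowers e → F u = F v := by
    intro u v huv
    obtain ⟨t, ht⟩ := Subgroup.mem_zpowers_iff.mp huv
    have hv : ((v : H) : G) = g ^ ((s : ℤ) * t) * ((u : H) : G) := by
      have h1 : ((u : H) : G) * ((((u⁻¹ * v : f.ker) : H)) : G) = ((v : H) : G) := by
        push_cast
        group
      rw [← ht] at h1
      have h2 : ((((e ^ t : f.ker) : H)) : G) = g ^ ((s : ℤ) * t) := by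
        push_cast [hecoe]
        rw [← zpow_natCast g s, ← zpow_mul]
      rw [h2] at h1
      rw [← h1, hcomm _ (huH u) _ (hgpow _)]
    apply Subtype.ext
    show {y : X | ∃ n : ℤ, y = g ^ n • (((u : H) : G) • x₀)}
        = {y : X | ∃ n : ℤ, y = g ^ n • (((v : H) : G) • x₀)}
    rw [hv, mul_smul, horb]
  set φ : (f.ker ⧸ Subgroup.zpowers e) → SO :=
    Quotient.lift F (fun a b hab' => hFcompat a b (QuotientGroup.leftRel_apply.mp hab'))
    with hφ
  have hφmk : ∀ u : f.ker, φ (QuotientGroup.mk u) = F u := fun _ => rfl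
  -- injectivity
  have hφinj : Function.Injective φ := by
    intro q1 q2
    induction q1 using QuotientGroup.induction_on
    induction q2 using QuotientGroup.induction_on
    rename_i u v
    intro hFuv
    rw [hφmk, hφmk] at hFuv
    have hvmem : ((v : H) : G) • x₀ ∈ (F v).1 := ⟨0, by simp⟩
    rw [← hFuv] at hvmem
    obtain ⟨n, hn⟩ := hvmem
    rw [smul_smul] at hn
    have hveq : ((v : H) : G) = g ^ n * ((u : H) : G) :=
      key2 _ (huH v) _ (mul_mem (hgpow n) (huH u)) hn
    have h2n : g ^ (2 * n) = 1 := by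
      have hc := hcomm _ (huH u) _ (huH v)
      have : g ^ (2 * n) = (g ^ n * ((u : H) : G)) * (g ^ n * ((u : H) : G)) *
          (((u : H) : G) * ((u : H) : G))⁻¹ := by
        rw [mul_assoc (g ^ n), ← mul_assoc (((u : H) : G)),
          hcomm _ (huH u) _ (hgpow n)]
        rw [mul_inv_rev]
        calc g ^ (2 * n) = g ^ n * g ^ n := by rw [← zpow_add]; congr 1; omega
          _ = _ := by group
      rw [← hveq, hu2 v, hu2 u] at this
      simpa using this
    have hrdvd : (r : ℤ) ∣ 2 * n := by
      rw [← hr]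
      exact orderOf_dvd_iff_zpow_eq_one.mpr h2n
    have hsdvd : (s : ℤ) ∣ n := by
      have : (2 : ℤ) * s ∣ 2 * n := by
        have : ((r : ℕ) : ℤ) = 2 * s := by omega
        rwa [this] at hrdvd
      exact (mul_dvd_mul_iff_left (by norm_num : (2:ℤ) ≠ 0)).mp this
    obtain ⟨t, ht⟩ := hsdvd
    show QuotientGroup.mk u = QuotientGroup.mk v
    rw [QuotientGroup.eq]
    refine Subgroup.mem_zpowers_iff.mpr ⟨t, ?_⟩
    apply Subtype.ext
    apply Subtype.ext
    push_cast [hecoe]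
    rw [← zpow_natCast g s, ← zpow_mul, ← ht, hveq]
    rw [huinv u, ← mul_assoc, hcomm _ (huH u) _ (hgpow n), mul_assoc, hu2 u,
      mul_one]
  -- surjectivity
  have hφsurj : Function.Surjective φ := by
    rintro ⟨O, ⟨x, hOx⟩, hOτ⟩
    obtain ⟨h, hh, hx⟩ := key6 x
    have hxO : x ∈ O := by rw [hOx]; exact ⟨0, by simp⟩
    have hτxO : τ • x ∈ O := by
      rw [← hOτ] at hxO
      obtain ⟨y, hy, hyx⟩ := hxO
      have : τ • x = y := by
        rw [← hyx]
        show τ • τ • y = y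
        rw [smul_smul, hτ2, one_smul]
      rwa [this]
    rw [hOx] at hτxO
    obtain ⟨n, hn⟩ := hτxO
    rw [hx, key1 h hh, smul_smul] at hn
    have heq : h⁻¹ * g⁻¹ = g ^ n * h :=
      key2 _ (mul_mem (inv_mem hh) (inv_mem hg)) _ (mul_mem (hgpow n) hh) hn
    have h1 : g⁻¹ = g ^ n * (h * h) := by
      have h0 : h * (h⁻¹ * g⁻¹) = h * (g ^ n * h) := by rw [heq]
      rw [← mul_assoc, mul_inv_cancel, one_mul] at h0
      rw [h0, ← mul_assoc, hcomm _ hh _ (hgpow n), mul_assoc]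
    have hsq : h * h = g ^ (-n - 1) := by
      have h2 : (g ^ n)⁻¹ * g⁻¹ = h * h := by rw [h1]; group
      rw [← h2, ← zpow_neg, ← zpow_sub_one]
    obtain ⟨t, ht⟩ := key5 h hh _ hsq
    have huG : (h * g ^ (-t)) * (h * g ^ (-t)) = 1 := by
      rw [mul_assoc, ← mul_assoc (g ^ (-t)), ← hcomm _ hh _ (hgpow (-t)),
        mul_assoc, ← zpow_add, ← mul_assoc, hsq, ← zpow_add]
      rw [show -n - 1 + (-t + -t) = 0 by omega, zpow_zero]
    have huGH : h * g ^ (-t) ∈ H := mul_mem hh (hgpow _)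
    set uK : f.ker := ⟨⟨h * g ^ (-t), huGH⟩, by
      rw [MonoidHom.mem_ker, hfval]; exact huG⟩ with huK
    refine ⟨QuotientGroup.mk uK, ?_⟩
    rw [hφmk]
    apply Subtype.ext
    show {y : X | ∃ n : ℤ, y = g ^ n • ((h * g ^ (-t)) • x₀)} = O
    rw [hOx, hx]
    rw [hcomm _ hh _ (hgpow (-t)), mul_smul]
    exact horb (h • x₀) (-t)
  -- putting it together
  have hcardSO : Nat.card SO = Nat.card (f.ker ⧸ Subgroup.zpowers e) :=
    (Nat.card_congr (Equiv.ofBijective φ ⟨hφinj, hφsurj⟩)).symm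
  have hsqcard : Nat.card {a : G | ∃ h ∈ H, a = h * h} = Nat.card f.range := by
    rw [hsetsq]
    rfl
  refine ⟨⟨s, hs⟩, ?_, ?_⟩
  · rw [hsqcard, hdiv, hKcard]
    exact ⟨Nat.card (f.ker ⧸ Subgroup.zpowers e), by ring⟩
  · rw [hsqcard, hdiv, hKcard]
    rw [Nat.mul_div_cancel _ (by norm_num)]
    exact hcardSO
end
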